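/- arXiv:math/0610300 — 4 statements merged into one kernel-verified Lean document; each statement's English description precedes it below -/
import Mathlib

section
/- The cochain complex (C_*(V), δ) is acyclic: for every k ≥ 1, every h ∈ C_{k+1}(V) with δh = 0 is of the form h = δf for some f ∈ C_k(V). In particular, every h ∈ C_2(V) with δh = 0 (i.e. h_{ts} = h_{tu} + h_{us} for all s,u,t) equals δf for some f ∈ C_1(V), meaning h_{ts} = f_t − f_s. -/
/-!
Fixing a base point `a`, the cone `(Ch)_s = -h_{a s}` is a contracting homotopy:
`δ(Ch) + C(δh) = h`. Hence a cocycle `h` is the coboundary of `Ch`, and `Ch` inherits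
the vanishing on consecutive diagonals from `h` because prepending `a` shifts every index by one.
-/

/-- The coboundary of `k`-increments. For `g : [0,T]^k → V`,
`(δg)_{t₁⋯t_{k+1}} = ∑_{i=1}^{k+1} (−1)^i g_{t₁ ⋯ t̂ᵢ ⋯ t_{k+1}}`. -/
def deltaMap {V : Type*} [AddCommGroup V] (T : ℝ) (k : ℕ)
    (g : (Fin k → Set.Icc (0 : ℝ) T) → V) :
    (Fin (k + 1) → Set.Icc (0 : ℝ) T) → V :=
  fun t => ∑ i : Fin (k + 1), ((-1 : ℤ) ^ ((i : ℕ) + 1)) • g (t ∘ i.succAbove)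

namespace Increment

variable {X V : Type*} [AddCommGroup V] {k : ℕ}

def coboundary (k : ℕ) (g : (Fin k → X) → V) : (Fin (k + 1) → X) → V :=
  fun t => ∑ i : Fin (k + 1), ((-1 : ℤ) ^ ((i : ℕ) + 1)) • g (t ∘ i.succAbove)

theorem deltaMap_eq_coboundary (T : ℝ)
    (g : (Fin k → Set.Icc (0 : ℝ) T) → V) : deltaMap T k g = coboundary k g :=
  rfl

def VanishesOnConsecutiveDiagonals (g : (Fin k → X) → V) : Prop :=
  ∀ t : Fin k → X, (∃ i j : Fin k, (i : ℕ) + 1 = (j : ℕ) ∧ t i = t j) → g t = 0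

def cone (a : X) (h : (Fin (k + 1) → X) → V) : (Fin k → X) → V :=
  fun s => -h (Fin.cons a s)

theorem VanishesOnConsecutiveDiagonals.cone {h : (Fin (k + 1) → X) → V}
    (hh : VanishesOnConsecutiveDiagonals h) (a : X) :
    VanishesOnConsecutiveDiagonals (Increment.cone a h) := by
  rintro s ⟨i, j, hij, hsij⟩
  rw [Increment.cone, hh (Fin.cons a s) ⟨i.succ, j.succ, by simpa using hij, by simpa using hsij⟩,
    neg_zero]

theorem cons_comp_succAbove_succ (a : X) (t : Fin (k + 1) → X) (i : Fin (k + 1)) :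
    Fin.cons a t ∘ i.succ.succAbove = Fin.cons a (t ∘ i.succAbove) := by
  funext m
  cases m using Fin.cases with
  | zero => simp
  | succ m => simp [Fin.succ_succAbove_succ]

theorem coboundary_cons (a : X) (h : (Fin (k + 1) → X) → V) (t : Fin (k + 1) → X) :
    coboundary (k + 1) h (Fin.cons a t) = -h t + coboundary k (cone a h) t := by
  rw [coboundary, Fin.sum_univ_succ, Fin.succAbove_zero, Fin.cons_comp_succ]
  congr 1
  · simp
  · refine Finset.sum_congr rfl fun i _ => ?_
    rw [cons_comp_succAbove_succ, cone, Fin.val_succ, pow_succ, mul_neg_one, neg_smul, smul_neg]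

theorem coboundary_cone_add_cone_coboundary (a : X) (h : (Fin (k + 1) → X) → V) :
    coboundary k (cone a h) + cone a (coboundary (k + 1) h) = h := by
  funext t
  rw [Pi.add_apply, cone, coboundary_cons]
  abel

theorem eq_coboundary_cone_of_coboundary_eq_zero (a : X) {h : (Fin (k + 1) → X) → V}
    (hh : coboundary (k + 1) h = 0) : coboundary k (cone a h) = h := by
  have hcone : cone a (0 : (Fin (k + 2) → X) → V) = 0 := funext fun _ => neg_zero
  simpa [hh, hcone] using coboundary_cone_add_cone_coboundary a h

end Increment

theorem acyclicity_general {V : Type*} [AddCommGroup V] (T : ℝ) (hT : 0 ≤ T) (k : ℕ)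
    (h : (Fin (k + 1) → Set.Icc (0 : ℝ) T) → V)
    (hmem : ∀ t : Fin (k + 1) → Set.Icc (0 : ℝ) T,
      (∃ i j : Fin (k + 1), (i : ℕ) + 1 = (j : ℕ) ∧ t i = t j) → h t = 0)
    (hcocycle : ∀ t : Fin (k + 2) → Set.Icc (0 : ℝ) T, deltaMap T (k + 1) h t = 0) :
    ∃ f : (Fin k → Set.Icc (0 : ℝ) T) → V,
      (∀ t : Fin k → Set.Icc (0 : ℝ) T,
        (∃ i j : Fin k, (i : ℕ) + 1 = (j : ℕ) ∧ t i = t j) → f t = 0)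
      ∧ ∀ t : Fin (k + 1) → Set.Icc (0 : ℝ) T, deltaMap T k f t = h t := by
  let a : Set.Icc (0 : ℝ) T := ⟨0, le_rfl, hT⟩
  have hδ : Increment.coboundary (k + 1) h = 0 := funext hcocycle
  refine ⟨Increment.cone a h, Increment.VanishesOnConsecutiveDiagonals.cone hmem a, fun t => ?_⟩
  rw [Increment.deltaMap_eq_coboundary, Increment.eq_coboundary_cone_of_coboundary_eq_zero a hδ]

/-- The complex `(C_*(V), δ)` is acyclic: for `k ≥ 1`, every
`h ∈ C_{k+1}(V)` with `δh = 0` is of the form `h = δf` for some `f ∈ C_k(V)`.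
Membership in `C_m(V)` means vanishing whenever two consecutive arguments coincide. -/
theorem acyclicity {V : Type*} [AddCommGroup V] (T : ℝ) (hT : 0 ≤ T) (k : ℕ) (hk : 1 ≤ k)
    (h : (Fin (k + 1) → Set.Icc (0 : ℝ) T) → V)
    (hmem : ∀ t : Fin (k + 1) → Set.Icc (0 : ℝ) T,
      (∃ i j : Fin (k + 1), (i : ℕ) + 1 = (j : ℕ) ∧ t i = t j) → h t = 0)
    (hcocycle : ∀ t : Fin (k + 2) → Set.Icc (0 : ℝ) T, deltaMap T (k + 1) h t = 0) :
    ∃ f : (Fin k → Set.Icc (0 : ℝ) T) → V,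
      (∀ t : Fin k → Set.Icc (0 : ℝ) T,
        (∃ i j : Fin k, (i : ℕ) + 1 = (j : ℕ) ∧ t i = t j) → f t = 0)
      ∧ ∀ t : Fin (k + 1) → Set.Icc (0 : ℝ) T, deltaMap T k f t = h t :=
  acyclicity_general T hT k h hmem hcocycle
end

section
/- Let x¹,…,x^d ∈ C¹([0,T],ℝ) and define iterated integrals recursively by 𝒥(dx^{i})_{ts} = x^i_t − x^i_s and 𝒥(dx^{i_1}⋯dx^{i_n})_{ts} = ∫_s^t 𝒥(dx^{i_2}⋯dx^{i_n})_{us} dx^{i_1}_u. Then Chen's multiplicative property holds: δ𝒥(dx^{i_1}⋯dx^{i_n})_{tus} = Σ_{k=1}^{n−1} 𝒥(dx^{i_1}⋯dx^{i_k})_{tu} · 𝒥(dx^{i_{k+1}}⋯dx^{i_n})_{us} for all s,u,t ∈ [0,T] and all multi-indices (i_1,…,i_n) ∈ {1,…,d}^n. -/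
/-- Iterated integrals of the C¹ paths `x i`:
`𝒥(dx^{i₁}⋯dx^{iₙ})_{ts} = ∫_s^t 𝒥(dx^{i₂}⋯dx^{iₙ})_{us} dx^{i₁}_u`,
with `𝒥` of the empty word equal to `1`. -/
noncomputable def J (d : ℕ) (x : Fin d → ℝ → ℝ) : List (Fin d) → ℝ → ℝ → ℝ
  | [], _, _ => 1
  | i :: is, t, s => ∫ u in s..t, deriv (x i) u * J d x is u s

/-!
Chen's identity is proved in its complete form
`𝒥(w)_{ts} = ∑_{k=0}^{n} 𝒥(w₁⋯w_k)_{tu} 𝒥(w_{k+1}⋯wₙ)_{us}`, with `𝒥` of the empty word equal to `1`,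
by induction on the word: splitting `∫_s^t = ∫_s^u + ∫_u^t` in the outer integral gives the `k = 0`
term, and the induction hypothesis for the inner word, integrated over `[u, t]`, gives the others.
The multiplicative property is this identity with the terms `k = 0` and `k = n` moved to the left.
-/

open intervalIntegral Finset

namespace J

variable {d : ℕ} {x : Fin d → ℝ → ℝ}

@[simp]
lemma nil (t s : ℝ) : J d x [] t s = 1 := rfl

lemma cons (i : Fin d) (w : List (Fin d)) (t s : ℝ) :
    J d x (i :: w) t s = ∫ u in s..t, deriv (x i) u * J d x w u s := rfl

variable (hx : ∀ i, Continuous (deriv (x i)))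
include hx

lemma continuous_left : ∀ (w : List (Fin d)) (s : ℝ), Continuous fun t => J d x w t s
  | [], _ => continuous_const
  | i :: w, s => by
    have h : Continuous fun u => deriv (x i) u * J d x w u s := (hx i).mul (continuous_left w s)
    simpa only [cons] using continuous_primitive (fun a b => h.intervalIntegrable a b) s

theorem eq_sum_take_mul_drop (w : List (Fin d)) (s u t : ℝ) :
    J d x w t s = ∑ k ∈ range (w.length + 1), J d x (w.take k) t u * J d x (w.drop k) u s := by
  induction w generalizing t with
  | nil => simp
  | cons i w ih =>
    have hint : ∀ (v : List (Fin d)) (a b c : ℝ),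
        IntervalIntegrable (fun r => deriv (x i) r * J d x v r c) MeasureTheory.volume a b :=
      fun v a b c => ((hx i).mul (continuous_left hx v c)).intervalIntegrable a b
    calc J d x (i :: w) t s
        = J d x (i :: w) u s + ∫ r in u..t, deriv (x i) r * J d x w r s := by
          rw [cons, cons, integral_add_adjacent_intervals (hint w s u s) (hint w u t s)]
      _ = J d x (i :: w) u s
            + ∑ k ∈ range (w.length + 1), J d x (i :: w.take k) t u * J d x (w.drop k) u s := by
          simp_rw [ih, mul_sum, ← mul_assoc]
          rw [integral_finsetSum fun k _ => (hint _ u t u).mul_const _]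
          simp only [integral_mul_const, cons]
      _ = _ := by
          rw [List.length_cons, sum_range_succ' _ (w.length + 1)]
          simp [add_comm]

end J

/-- Chen's multiplicative property:
`δ𝒥(dx^{i₁}⋯dx^{iₙ})_{tus} = ∑_{k=1}^{n−1} 𝒥(dx^{i₁}⋯dx^{i_k})_{tu} 𝒥(dx^{i_{k+1}}⋯dx^{iₙ})_{us}`. -/
theorem chen_multiplicative_property (d : ℕ) (x : Fin d → ℝ → ℝ)
    (hx : ∀ i, ContDiff ℝ 1 (x i)) (T : ℝ)
    (i : Fin d) (l : List (Fin d)) :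
    ∀ s ∈ Set.Icc (0 : ℝ) T, ∀ u ∈ Set.Icc (0 : ℝ) T, ∀ t ∈ Set.Icc (0 : ℝ) T,
      J d x (i :: l) t s - J d x (i :: l) t u - J d x (i :: l) u s
        = ∑ k ∈ Finset.Ico 1 (i :: l).length,
            J d x ((i :: l).take k) t u * J d x ((i :: l).drop k) u s := by
  intro s _ u _ t _
  rw [J.eq_sum_take_mul_drop (fun j => (hx j).continuous_deriv le_rfl) (i :: l) s u t,
    sum_range_succ, sum_range_eq_add_Ico _ (List.length_pos_of_ne_nil (List.cons_ne_nil i l))]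
  simp only [List.take_zero, List.drop_zero, List.take_length, List.drop_length, J.nil, one_mul,
    mul_one]
  ring
end

section
/- Let μ > 1. Suppose Λ : ZC_3^μ(V) → C_2^μ(V) is a linear map satisfying δ(Λh) = h for all h ∈ ZC_3^μ(V). Then under the assumption ‖Λh‖_μ ≤ (2^μ − 2)^{−1}‖h‖_μ, any two such maps coincide; more precisely, if Λ, Λ' both satisfy δΛ = id and map into C_2^{1+}(V), then Λ = Λ'. -/
open Filter

lemma aux_tendsto (C d ν : ℝ) (hd : 0 ≤ d) (hν : 1 < ν) :
    Tendsto (fun n : ℕ => (n : ℝ) * (C * (d / n) ^ ν)) atTop (nhds 0) := by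
  have h1 : Tendsto (fun n : ℕ => (n : ℝ) ^ (1 - ν)) atTop (nhds 0) := by
    have := (tendsto_rpow_neg_atTop (by linarith : (0:ℝ) < ν - 1)).comp
      tendsto_natCast_atTop_atTop
    simpa [neg_sub, Function.comp_def] using this
  have h2 : Tendsto (fun n : ℕ => (C * d ^ ν) * (n : ℝ) ^ (1 - ν)) atTop (nhds 0) := by
    simpa using h1.const_mul (C * d ^ ν)
  apply h2.congr'
  filter_upwards [eventually_ge_atTop 1] with n hn
  have hn0 : (0:ℝ) < (n:ℝ) := by exact_mod_cast hn
  rw [Real.div_rpow hd hn0.le]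
  rw [Real.rpow_sub hn0, Real.rpow_one]
  field_simp



variable {V : Type*} [NormedAddCommGroup V]

/-- `h ∈ ZC₃(V)` on `[0,T]`: the coboundary of the 3-increment `h` vanishes. -/
def IsCocycle3 (T : ℝ) (h : ℝ → ℝ → ℝ → V) : Prop :=
  ∀ t ∈ Set.Icc (0 : ℝ) T, ∀ u ∈ Set.Icc (0 : ℝ) T, ∀ v ∈ Set.Icc (0 : ℝ) T,
    ∀ s ∈ Set.Icc (0 : ℝ) T,
      -h u v s + h t v s - h t u s + h t u v = 0

/-- `h ∈ C₃^μ(V)`: finiteness of the norm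
`‖h‖_μ = inf {Σᵢ ‖hᵢ‖_{ρᵢ,μ−ρᵢ} : h = Σᵢ hᵢ, 0 < ρᵢ < μ}`, i.e. `h` admits a finite
decomposition `h = Σᵢ hᵢ` with `‖hᵢ‖_{ρᵢ,μ−ρᵢ} < ∞`. -/
def MemC3 (T μ : ℝ) (h : ℝ → ℝ → ℝ → V) : Prop :=
  ∃ (m : ℕ) (hs : Fin m → ℝ → ℝ → ℝ → V) (ρ C : Fin m → ℝ),
    (∀ t ∈ Set.Icc (0 : ℝ) T, ∀ u ∈ Set.Icc (0 : ℝ) T, ∀ s ∈ Set.Icc (0 : ℝ) T,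
      h t u s = ∑ i, hs i t u s)
    ∧ ∀ i, 0 < ρ i ∧ ρ i < μ ∧
        ∀ t ∈ Set.Icc (0 : ℝ) T, ∀ u ∈ Set.Icc (0 : ℝ) T, ∀ s ∈ Set.Icc (0 : ℝ) T,
          ‖hs i t u s‖ ≤ C i * |u - s| ^ (ρ i) * |t - u| ^ (μ - ρ i)

/-- `f ∈ C₂^{1+}(V)`: `‖f‖_ν < ∞` for some `ν > 1`. -/
def MemC2OnePlus (T : ℝ) (f : ℝ → ℝ → V) : Prop :=
  ∃ ν : ℝ, 1 < ν ∧ ∃ C : ℝ, ∀ t ∈ Set.Icc (0 : ℝ) T, ∀ s ∈ Set.Icc (0 : ℝ) T,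
    ‖f t s‖ ≤ C * |t - s| ^ ν

/-- Uniqueness of the `Λ`-map: if `Λ` and `Λ'` both satisfy `δΛ = id` on
`ZC₃^μ(V)` (with `μ > 1`) and map into `C₂^{1+}(V)`, then `Λ = Λ'`. -/
theorem lambda_map_unique (T : ℝ) (hT : 0 < T) (μ : ℝ) (hμ : 1 < μ)
    (Λ Λ' : (ℝ → ℝ → ℝ → V) → (ℝ → ℝ → V))
    (hΛ : ∀ h : ℝ → ℝ → ℝ → V, IsCocycle3 T h → MemC3 T μ h →
      (∀ t ∈ Set.Icc (0 : ℝ) T, ∀ u ∈ Set.Icc (0 : ℝ) T, ∀ s ∈ Set.Icc (0 : ℝ) T,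
        Λ h t s - Λ h t u - Λ h u s = h t u s) ∧ MemC2OnePlus T (Λ h))
    (hΛ' : ∀ h : ℝ → ℝ → ℝ → V, IsCocycle3 T h → MemC3 T μ h →
      (∀ t ∈ Set.Icc (0 : ℝ) T, ∀ u ∈ Set.Icc (0 : ℝ) T, ∀ s ∈ Set.Icc (0 : ℝ) T,
        Λ' h t s - Λ' h t u - Λ' h u s = h t u s) ∧ MemC2OnePlus T (Λ' h)) :
    ∀ h : ℝ → ℝ → ℝ → V, IsCocycle3 T h → MemC3 T μ h →
      ∀ t ∈ Set.Icc (0 : ℝ) T, ∀ s ∈ Set.Icc (0 : ℝ) T, Λ h t s = Λ' h t s := by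
  intro h hc hm t ht s hs
  obtain ⟨hδ1, ν1, hν1, C1, hC1⟩ := hΛ h hc hm
  obtain ⟨hδ2, ν2, hν2, C2, hC2⟩ := hΛ' h hc hm
  set g : ℝ → ℝ → V := fun a b => Λ h a b - Λ' h a b with hgdef
  have h0T : (0:ℝ) ∈ Set.Icc (0:ℝ) T := ⟨le_refl _, hT.le⟩
  have hcocy : ∀ a ∈ Set.Icc (0:ℝ) T, ∀ b ∈ Set.Icc (0:ℝ) T, ∀ c ∈ Set.Icc (0:ℝ) T,
      g a c = g a b + g b c := by
    intro a ha b hb c hc'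
    have e1 := hδ1 a ha b hb c hc'
    have e2 := hδ2 a ha b hb c hc'
    have key : g a c - (g a b + g b c) = 0 := by
      have expand : g a c - (g a b + g b c)
          = (Λ h a c - Λ h a b - Λ h b c) - (Λ' h a c - Λ' h a b - Λ' h b c) := by
        simp only [hgdef]; abel
      rw [expand, e1, e2, sub_self]
    exact sub_eq_zero.mp key
  set f : ℝ → V := fun a => g a 0 with hfdef
  have hg00 : g 0 0 = 0 := by
    have h' := hcocy 0 h0T 0 h0T 0 h0T
    exact (add_eq_left.mp h'.symm)
  have hrep : ∀ a ∈ Set.Icc (0:ℝ) T, ∀ b ∈ Set.Icc (0:ℝ) T, g a b = f a - f b := by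
    intro a ha b hb
    have e1 := hcocy a ha 0 h0T b hb
    have e2 := hcocy 0 h0T b hb 0 h0T
    rw [hg00] at e2
    have e3 : g 0 b = - g b 0 := eq_neg_of_add_eq_zero_left e2.symm
    rw [e1, e3]
    simp only [hfdef]
    abel
  have hbound : ∀ a ∈ Set.Icc (0:ℝ) T, ∀ b ∈ Set.Icc (0:ℝ) T,
      ‖g a b‖ ≤ C1 * |a - b| ^ ν1 + C2 * |a - b| ^ ν2 := by
    intro a ha b hb
    calc ‖g a b‖ ≤ ‖Λ h a b‖ + ‖Λ' h a b‖ := norm_sub_le _ _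
    _ ≤ _ := add_le_add (hC1 a ha b hb) (hC2 a ha b hb)
  have key : ∀ n : ℕ, 1 ≤ n →
      ‖g t s‖ ≤ (n:ℝ) * (C1 * (|t - s| / n) ^ ν1) + (n:ℝ) * (C2 * (|t - s| / n) ^ ν2) := by
    intro n hn
    have hn0 : (0:ℝ) < (n:ℝ) := by exact_mod_cast hn
    set x : ℕ → ℝ := fun i => s + i * (t - s) / n with hx
    have hxmem : ∀ i ≤ n, x i ∈ Set.Icc (0:ℝ) T := by
      intro i hi
      have hi' : (i:ℝ) ≤ n := by exact_mod_cast hi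
      have h1 : (0:ℝ) ≤ (i:ℝ)/n := by positivity
      have h2 : (i:ℝ)/n ≤ 1 := by rw [div_le_one hn0]; exact hi'
      have hxi : x i = (1 - (i:ℝ)/n) * s + ((i:ℝ)/n) * t := by
        simp only [hx]; field_simp; ring
      constructor
      · rw [hxi]; nlinarith [hs.1, ht.1]
      · rw [hxi]; nlinarith [hs.2, ht.2]
    have hxdiff : ∀ i : ℕ, x (i+1) - x i = (t - s) / n := by
      intro i; simp only [hx]; push_cast; ring
    have htele : g t s = ∑ i ∈ Finset.range n, (f (x (i+1)) - f (x i)) := by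
      rw [Finset.sum_range_sub (fun i => f (x i))]
      have hxn : x n = t := by simp only [hx]; field_simp; ring
      have hx0 : x 0 = s := by simp [hx]
      rw [hxn, hx0, hrep t ht s hs]
    rw [htele]
    calc ‖∑ i ∈ Finset.range n, (f (x (i+1)) - f (x i))‖
        ≤ ∑ i ∈ Finset.range n, ‖f (x (i+1)) - f (x i)‖ := norm_sum_le _ _
      _ ≤ ∑ _i ∈ Finset.range n, (C1 * (|t - s|/n) ^ ν1 + C2 * (|t - s|/n) ^ ν2) := by
          apply Finset.sum_le_sum
          intro i hi
          have hi' : i + 1 ≤ n := Finset.mem_range.mp hi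
          have h1 := hxmem (i+1) hi'
          have h2 := hxmem i (Nat.le_of_succ_le hi')
          have hb := hbound (x (i+1)) h1 (x i) h2
          rw [← hrep (x (i+1)) h1 (x i) h2]
          have habs : |x (i+1) - x i| = |t - s| / n := by
            rw [hxdiff, abs_div, Nat.abs_cast]
          rwa [habs] at hb
      _ = (n:ℝ) * (C1 * (|t - s|/n) ^ ν1) + (n:ℝ) * (C2 * (|t - s|/n) ^ ν2) := by
          rw [Finset.sum_const, Finset.card_range, nsmul_eq_mul]
          ring
  have hlim : Filter.Tendsto
      (fun n : ℕ => (n:ℝ) * (C1 * (|t - s| / n) ^ ν1) + (n:ℝ) * (C2 * (|t - s| / n) ^ ν2))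
      Filter.atTop (nhds 0) := by
    have := (aux_tendsto C1 |t - s| ν1 (abs_nonneg _) hν1).add
      (aux_tendsto C2 |t - s| ν2 (abs_nonneg _) hν2)
    simpa using this
  have hle : ‖g t s‖ ≤ 0 := by
    apply ge_of_tendsto hlim
    filter_upwards [Filter.eventually_ge_atTop 1] with n hn
    exact key n hn
  have hz : g t s = 0 := norm_le_zero_iff.mp hle
  exact sub_eq_zero.mp hz
end

section
/- Let g ∈ C_2(V) with δg ∈ C_3^{1+}(V), and suppose g = δf + ΛδG decomposition exists, i.e. there is a unique f ∈ C_1(V) with f_0 = 0 and a unique decomposition g = δf + Λδg where Λ : ZC_3^{1+}(V) → C_2^{1+}(V) is the unique right inverse of δ. Then (δf)_{ts} = lim_{|Π_{ts}|→0} Σ_{i=0}^{n−1} g_{t_{i+1} t_i}, where the limit is over partitions Π_{ts} = {s = t_0 < t_1 < ⋯ < t_n = t} with mesh tending to zero. -/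
/-!
Along a partition `s = t₀ < ⋯ < tₙ = t` the increments of `f` telescope, so
`∑ g_{tᵢ₊₁ tᵢ} - (f t - f s) = ∑ r_{tᵢ₊₁ tᵢ}`. Since `‖r_{vu}‖ ≤ C |v - u|^ν` with `ν > 1`,
each term is at most `C δ^{ν-1} (tᵢ₊₁ - tᵢ)` when the mesh is at most `δ`, so the remainder is
bounded by `C δ^{ν-1} (t - s)`, which tends to `0` with `δ`.
-/

open Filter Topology Finset

lemma mem_Icc_of_forall_le_succ {α : Type*} [Preorder α] {P : ℕ → α} {n : ℕ}
    (hP : ∀ i < n, P i ≤ P (i + 1)) {i : ℕ} (hi : i ≤ n) : P i ∈ Set.Icc (P 0) (P n) := by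
  have hmono : Monotone fun k => P (min k n) := by
    refine monotone_nat_of_le_succ fun k => ?_
    rcases lt_or_ge k n with hk | hk
    · simpa [min_eq_left hk.le, min_eq_left (Nat.succ_le_of_lt hk)] using hP k hk
    · simp [min_eq_right hk, min_eq_right (hk.trans k.le_succ)]
  simpa [min_eq_left hi] using And.intro (hmono (Nat.zero_le i)) (hmono hi)

lemma Real.rpow_le_rpow_sub_one_mul {x δ ν : ℝ} (hx : 0 ≤ x) (hxδ : x ≤ δ) (hν : 1 ≤ ν) :
    x ^ ν ≤ δ ^ (ν - 1) * x := by
  calc x ^ ν = x ^ (ν - 1) * x := by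
        rw [← Real.rpow_add_one' hx (by linarith), sub_add_cancel]
    _ ≤ δ ^ (ν - 1) * x := by
        gcongr

lemma sum_range_eq_sub_add_of_eq_sub_add {α V : Type*} [AddCommGroup V] {S : Set α}
    {g r : α → α → V} {f : α → V} (hdecomp : ∀ t ∈ S, ∀ s ∈ S, g t s = (f t - f s) + r t s)
    {n : ℕ} {P : ℕ → α} (hPS : ∀ i ≤ n, P i ∈ S) :
    ∑ i ∈ range n, g (P (i + 1)) (P i)
      = (f (P n) - f (P 0)) + ∑ i ∈ range n, r (P (i + 1)) (P i) := by
  have hterm : ∀ i ∈ range n,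
      g (P (i + 1)) (P i) = (f (P (i + 1)) - f (P i)) + r (P (i + 1)) (P i) :=
    fun i hi => hdecomp _ (hPS _ (mem_range.mp hi)) _ (hPS _ (mem_range.mp hi).le)
  rw [sum_congr rfl hterm, sum_add_distrib, sum_range_sub (fun i => f (P i))]

lemma norm_sum_range_le_of_norm_le_rpow {V : Type*} [SeminormedAddCommGroup V]
    {r : ℝ → ℝ → V} {C ν δ : ℝ} (hC : 0 ≤ C) (hν : 1 ≤ ν) {n : ℕ} {P : ℕ → ℝ}
    (hmono : ∀ i < n, P i ≤ P (i + 1)) (hmesh : ∀ i < n, P (i + 1) - P i ≤ δ)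
    (hr : ∀ i < n, ‖r (P (i + 1)) (P i)‖ ≤ C * (P (i + 1) - P i) ^ ν) :
    ‖∑ i ∈ range n, r (P (i + 1)) (P i)‖ ≤ C * δ ^ (ν - 1) * (P n - P 0) := by
  have hterm : ∀ i ∈ range n, ‖r (P (i + 1)) (P i)‖ ≤ C * δ ^ (ν - 1) * (P (i + 1) - P i) := by
    intro i hi
    have hi := mem_range.mp hi
    calc ‖r (P (i + 1)) (P i)‖ ≤ C * (P (i + 1) - P i) ^ ν := hr i hi
      _ ≤ C * (δ ^ (ν - 1) * (P (i + 1) - P i)) := by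
          gcongr
          exact Real.rpow_le_rpow_sub_one_mul (sub_nonneg.mpr (hmono i hi)) (hmesh i hi) hν
      _ = C * δ ^ (ν - 1) * (P (i + 1) - P i) := by ring
  calc ‖∑ i ∈ range n, r (P (i + 1)) (P i)‖
      ≤ ∑ i ∈ range n, C * δ ^ (ν - 1) * (P (i + 1) - P i) := norm_sum_le_of_le _ hterm
    _ = C * δ ^ (ν - 1) * (P n - P 0) := by rw [← mul_sum, sum_range_sub]

lemma exists_pos_mul_rpow_mul_lt {C ν L ε : ℝ} (hν : 1 < ν) (hε : 0 < ε) :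
    ∃ δ > (0 : ℝ), C * δ ^ (ν - 1) * L < ε := by
  have hlim : Tendsto (fun δ : ℝ => C * δ ^ (ν - 1) * L) (𝓝 0) (𝓝 0) := by
    have hpow := Real.continuousAt_rpow_const 0 (ν - 1) (Or.inr (by linarith))
    simpa [Real.zero_rpow (by linarith : ν - 1 ≠ 0)] using
      (hpow.tendsto.const_mul C).mul_const L
  exact ((eventually_mem_nhdsWithin (s := Set.Ioi 0)).and
    (nhdsWithin_le_nhds (hlim.eventually (gt_mem_nhds hε)))).exists

theorem delta_f_eq_limit_of_riemann_sums_general {V : Type*} [NormedAddCommGroup V]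
    (T : ℝ) (g : ℝ → ℝ → V) (f : ℝ → V) (r : ℝ → ℝ → V)
    (hdecomp : ∀ t ∈ Set.Icc (0 : ℝ) T, ∀ s ∈ Set.Icc (0 : ℝ) T,
      g t s = (f t - f s) + r t s)
    (hr : ∃ ν : ℝ, 1 < ν ∧ ∃ C : ℝ, ∀ t ∈ Set.Icc (0 : ℝ) T, ∀ s ∈ Set.Icc (0 : ℝ) T,
      ‖r t s‖ ≤ C * |t - s| ^ ν) :
    ∀ s ∈ Set.Icc (0 : ℝ) T, ∀ t ∈ Set.Icc (0 : ℝ) T, s ≤ t →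
      ∀ ε > (0 : ℝ), ∃ δ > (0 : ℝ), ∀ (n : ℕ) (P : ℕ → ℝ), 0 < n →
        P 0 = s → P n = t → (∀ i < n, P i < P (i + 1)) →
        (∀ i < n, P (i + 1) - P i < δ) →
        ‖(∑ i ∈ Finset.range n, g (P (i + 1)) (P i)) - (f t - f s)‖ < ε := by
  intro s hs t ht _ ε hε
  obtain ⟨ν, hν, C, hC⟩ := hr
  obtain ⟨δ, hδ, hsmall⟩ := exists_pos_mul_rpow_mul_lt (C := max C 0) (L := t - s) hν hε
  refine ⟨δ, hδ, fun n P _ hP0 hPn hinc hmesh => ?_⟩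
  have hmono : ∀ i < n, P i ≤ P (i + 1) := fun i hi => (hinc i hi).le
  have hPI : ∀ i ≤ n, P i ∈ Set.Icc 0 T := fun i hi => by
    have hPi := mem_Icc_of_forall_le_succ hmono hi
    rw [hP0, hPn] at hPi
    exact ⟨hs.1.trans hPi.1, hPi.2.trans ht.2⟩
  have hrP : ∀ i < n, ‖r (P (i + 1)) (P i)‖ ≤ max C 0 * (P (i + 1) - P i) ^ ν := fun i hi => by
    have hCi := hC _ (hPI _ hi) _ (hPI _ hi.le)
    rw [abs_of_nonneg (sub_nonneg.mpr (hmono i hi))] at hCi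
    exact hCi.trans (mul_le_mul_of_nonneg_right (le_max_left C 0)
      (Real.rpow_nonneg (sub_nonneg.mpr (hmono i hi)) ν))
  have hbound := norm_sum_range_le_of_norm_le_rpow (le_max_right C 0) hν.le hmono
    (fun i hi => (hmesh i hi).le) hrP
  rw [hP0, hPn] at hbound
  rw [sum_range_eq_sub_add_of_eq_sub_add hdecomp hPI, hP0, hPn, add_sub_cancel_left]
  exact hbound.trans_lt hsmall

/-- Riemann-sum representation of the regular part: if `g ∈ C₂(V)` decomposes as
`g = δf + r` with `f_0 = 0` and `r = Λδg ∈ C₂^{1+}(V)`, then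
`(δf)_{ts} = lim_{|Π_{ts}|→0} Σᵢ g_{t_{i+1} tᵢ}` over partitions
`Π_{ts} = {s = t₀ < t₁ < ⋯ < tₙ = t}` of `[s,t]` with mesh tending to zero. -/
theorem delta_f_eq_limit_of_riemann_sums {V : Type*} [NormedAddCommGroup V]
    (T : ℝ) (hT : 0 < T) (g : ℝ → ℝ → V) (f : ℝ → V) (r : ℝ → ℝ → V)
    (hf0 : f 0 = 0)
    (hdecomp : ∀ t ∈ Set.Icc (0 : ℝ) T, ∀ s ∈ Set.Icc (0 : ℝ) T,
      g t s = (f t - f s) + r t s)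
    (hr : ∃ ν : ℝ, 1 < ν ∧ ∃ C : ℝ, ∀ t ∈ Set.Icc (0 : ℝ) T, ∀ s ∈ Set.Icc (0 : ℝ) T,
      ‖r t s‖ ≤ C * |t - s| ^ ν) :
    ∀ s ∈ Set.Icc (0 : ℝ) T, ∀ t ∈ Set.Icc (0 : ℝ) T, s ≤ t →
      ∀ ε > (0 : ℝ), ∃ δ > (0 : ℝ), ∀ (n : ℕ) (P : ℕ → ℝ), 0 < n →
        P 0 = s → P n = t → (∀ i < n, P i < P (i + 1)) →
        (∀ i < n, P (i + 1) - P i < δ) →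
        ‖(∑ i ∈ Finset.range n, g (P (i + 1)) (P i)) - (f t - f s)‖ < ε :=
  delta_f_eq_limit_of_riemann_sums_general T g f r hdecomp hr
end
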